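/- In any chord diagram, the number of odd chords is even. Consequently, for any signed chord diagram (each chord carrying a sign ±1), the odd writhe J(K) = sum of signs over odd chords is an even integer. -/

import Mathlib

open Finset LaurentPolynomial

/-- A signed, oriented chord diagram (combinatorial Gauss diagram) with `n` chords:
the `2*n` chord endpoints on the circle are the elements of `Fin (2*n)` in (positive)
cyclic order; chord `i` has over endpoint `c⁺ = ep (i, true)`, under endpoint
`c⁻ = ep (i, false)` and a sign (writhe) `sign i ∈ {1, -1}`. -/
structure ChordDiagram (n : ℕ) where
  ep : Fin n × Bool ≃ Fin (2 * n)
  sign : Fin n → ℤ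
  sign_unit : ∀ i, sign i = 1 ∨ sign i = -1

namespace ChordDiagram

variable {n : ℕ}

/-- the over endpoint `c⁺` of a chord -/
def overEnd (D : ChordDiagram n) (i : Fin n) : Fin (2 * n) := D.ep (i, true)

/-- the under endpoint `c⁻` of a chord -/
def under (D : ChordDiagram n) (i : Fin n) : Fin (2 * n) := D.ep (i, false)

/-- the number of steps from `b` to `x`, travelling in the positive direction
around the circle -/
def relpos (b x : Fin (2 * n)) : ℕ := (x.val + 2 * n - b.val) % (2 * n)

/-- `x` lies strictly between the endpoints of chord `i`, on the side swept out
going from `c⁺` to `c⁻` in the positive direction -/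
def StrictlyBetween (D : ChordDiagram n) (i : Fin n) (x : Fin (2 * n)) : Prop :=
  0 < relpos (D.overEnd i) x ∧ relpos (D.overEnd i) x < relpos (D.overEnd i) (D.under i)

instance (D : ChordDiagram n) (i : Fin n) (x : Fin (2 * n)) :
    Decidable (D.StrictlyBetween i x) := inferInstanceAs (Decidable (_ ∧ _))

/-- two distinct chords interlink if their endpoints alternate around the circle,
i.e. exactly one endpoint of `j` lies strictly between the endpoints of `i` -/
def Interlinks (D : ChordDiagram n) (i j : Fin n) : Prop :=
  i ≠ j ∧ Xor (D.StrictlyBetween i (D.overEnd j)) (D.StrictlyBetween i (D.under j))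

instance (D : ChordDiagram n) (i j : Fin n) : Decidable (D.Interlinks i j) :=
  inferInstanceAs (Decidable (_ ∧ _))

/-- the number of chords interlinking chord `i` -/
def interlinkCount (D : ChordDiagram n) (i : Fin n) : ℕ :=
  (univ.filter fun j => D.Interlinks i j).card

/-- the number of chord endpoints lying (strictly) on one side of chord `i` -/
def sideCount (D : ChordDiagram n) (i : Fin n) : ℕ :=
  (univ.filter fun x => D.StrictlyBetween i x).card

/-- a chord is odd if it interlinks an odd number of other chords -/
def OddChord (D : ChordDiagram n) (i : Fin n) : Prop := Odd (D.interlinkCount i)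

instance (D : ChordDiagram n) (i : Fin n) : Decidable (D.OddChord i) :=
  inferInstanceAs (Decidable (Odd _))

/-- The label `N(a)` of the arc whose terminal point is `a`: the sum of the signs of
all chords whose over endpoint is met strictly before their under endpoint when
traversing the circle once in the positive direction starting inside this arc. -/
def arcLabel (D : ChordDiagram n) (a : Fin (2 * n)) : ℤ :=
  ∑ i ∈ univ.filter fun i => relpos a (D.overEnd i) < relpos a (D.under i), D.sign i

/-- The value `N(c)` of a chord: for a positive chord, the difference `x - y` of the
arc labels just before `c⁺` and just before `c⁻`; for a negative chord, the difference
`z - w` of the arc labels just after `c⁺` and just after `c⁻` (the label just after an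
over endpoint is the label just before it minus the sign, and the label just after an
under endpoint is the label just before it plus the sign). -/
def chordVal (D : ChordDiagram n) (i : Fin n) : ℤ :=
  if D.sign i = 1 then D.arcLabel (D.overEnd i) - D.arcLabel (D.under i)
  else (D.arcLabel (D.overEnd i) - D.sign i) - (D.arcLabel (D.under i) + D.sign i)

/-- the odd writhe `J(K) = Σ_{c odd} w(c)` -/
def oddWrithe (D : ChordDiagram n) : ℤ :=
  ∑ i ∈ univ.filter fun i => D.OddChord i, D.sign i

/-- the odd writhe polynomial `f_K(t) = Σ_{c odd} w(c) · t^{N(c)} ∈ ℤ[t,t⁻¹]` -/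
noncomputable def owp (D : ChordDiagram n) : LaurentPolynomial ℤ :=
  ∑ i ∈ univ.filter fun i => D.OddChord i, C (D.sign i) * T (D.chordVal i)

/-- evaluation of the odd writhe polynomial at a rational number `x`:
`Σ_{c odd} w(c) · x^{N(c)}` -/
def owpEval (D : ChordDiagram n) (x : ℚ) : ℚ :=
  ∑ i ∈ univ.filter fun i => D.OddChord i, (D.sign i : ℚ) * x ^ D.chordVal i

/-- the coefficient of `t^k` in a Laurent polynomial -/
def coeffOf (f : LaurentPolynomial ℤ) (k : ℤ) : ℤ := f.coeff k

/-- the degree `Deg f = max { |i| : coefficient of tⁱ in f is nonzero }` -/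
def owpDeg (f : LaurentPolynomial ℤ) : ℕ := f.coeff.support.sup fun k => k.natAbs

/-- reversing the orientation of the knot: the cyclic order of the endpoints is
reversed, while signs and over/under data of the crossings are preserved -/
def reverse (D : ChordDiagram n) : ChordDiagram n where
  ep := D.ep.trans Fin.revPerm
  sign := D.sign
  sign_unit := D.sign_unit

/-- the mirror image: every crossing is switched, so every chord's over and under
endpoints are exchanged and its sign is negated -/
def mirror (D : ChordDiagram n) : ChordDiagram n where
  ep := (Equiv.prodCongr (Equiv.refl (Fin n))
      ⟨fun b => !b, fun b => !b, Bool.not_not, Bool.not_not⟩).trans D.ep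
  sign := fun i => -D.sign i
  sign_unit := fun i => (D.sign_unit i).elim
    (fun h => Or.inr (show -D.sign i = -1 by rw [h]))
    (fun h => Or.inl (show -D.sign i = 1 by rw [h]; ring))

/-! ### Planarity via the Euler characteristic of the carrier surface

The diagram determines a 4-valent graph (vertices = chords, edges = the `2*n` arcs of
the circle) together with a rotation system at each vertex, coming from the structure
of a transversal crossing: for a positive crossing the counterclockwise order of the
four ends is (over-out, under-out, over-in, under-in), for a negative crossing it is
(over-out, under-in, over-in, under-out).  The diagram is realizable by a classical
(planar) knot diagram iff the resulting closed oriented carrier surface is a sphere,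
i.e. iff `V - E + F = n - 2n + F = 2`.

Darts are encoded as pairs `(p, io) : Fin (2*n) × Bool`, meaning the end of an arc
at the vertex through the circle point `p`, with `io = true` for the outgoing arc
(from `p` to `p+1`) and `io = false` for the incoming arc (from `p-1` to `p`). -/

/-- the other endpoint of the chord through a given endpoint -/
def otherEnd (D : ChordDiagram n) (p : Fin (2 * n)) : Fin (2 * n) :=
  D.ep ((D.ep.symm p).1, !(D.ep.symm p).2)

lemma otherEnd_otherEnd (D : ChordDiagram n) (p : Fin (2 * n)) :
    D.otherEnd (D.otherEnd p) = p := by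
  simp [otherEnd]

/-- whether the rotation at the vertex toggles the in/out marker when passing from
the end at `p` to the end at the other endpoint of its chord -/
def tog (D : ChordDiagram n) (p : Fin (2 * n)) : Bool :=
  if D.sign (D.ep.symm p).1 = 1 then !(D.ep.symm p).2 else (D.ep.symm p).2

/-- the vertex rotation permutation on darts -/
def vertexPerm (D : ChordDiagram n) : Equiv.Perm (Fin (2 * n) × Bool) :=
  Equiv.trans
    ⟨fun x => (x.1, xor x.2 (D.tog x.1)), fun x => (x.1, xor x.2 (D.tog x.1)),
      fun x => by simp [Bool.xor_assoc], fun x => by simp [Bool.xor_assoc]⟩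
    ⟨fun x => (D.otherEnd x.1, x.2), fun x => (D.otherEnd x.1, x.2),
      fun x => by simp [otherEnd_otherEnd], fun x => by simp [otherEnd_otherEnd]⟩

/-- the edge involution on darts, matching the two ends of each arc -/
def arcPerm (D : ChordDiagram n) : Equiv.Perm (Fin (2 * n) × Bool) :=
  ⟨fun x => if x.2 then (finRotate (2 * n) x.1, false) else ((finRotate (2 * n)).symm x.1, true),
   fun x => if x.2 then (finRotate (2 * n) x.1, false) else ((finRotate (2 * n)).symm x.1, true),
   fun x => by rcases x with ⟨p, _ | _⟩ <;> simp only [Bool.false_eq_true, if_false, if_true, Equiv.apply_symm_apply, Equiv.symm_apply_apply, ite_true, ite_false, reduceIte],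
   fun x => by rcases x with ⟨p, _ | _⟩ <;> simp only [Bool.false_eq_true, if_false, if_true, Equiv.apply_symm_apply, Equiv.symm_apply_apply, ite_true, ite_false, reduceIte]⟩

/-- the face permutation on darts -/
def facePerm (D : ChordDiagram n) : Equiv.Perm (Fin (2 * n) × Bool) :=
  (D.arcPerm).trans D.vertexPerm

/-- the number of faces: the number of orbits of the face permutation -/
noncomputable def faceCount (D : ChordDiagram n) : ℕ :=
  Nat.card (MulAction.orbitRel.Quotient (Subgroup.zpowers D.facePerm) (Fin (2 * n) × Bool))

/-- the chord diagram arises from a classical (planar) knot diagram: the carrier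
surface has Euler characteristic `V - E + F = n - 2n + faceCount = 2` -/
def PlanarRealizable (D : ChordDiagram n) : Prop := D.faceCount = n + 2

end ChordDiagram


open ChordDiagram

section Aux

variable {n : ℕ}

lemma relpos_spec (b x : Fin (2 * n)) :
    relpos b x = if b.val ≤ x.val then x.val - b.val else x.val + 2 * n - b.val := by
  have hx := x.isLt
  have hb := b.isLt
  unfold relpos
  split
  · have h : x.val + 2 * n - b.val = (x.val - b.val) + 2 * n := by omega
    rw [h, Nat.add_mod_right, Nat.mod_eq_of_lt (by omega)]
  · exact Nat.mod_eq_of_lt (by omega)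

lemma interlinks_symm (D : ChordDiagram n) {i j : Fin n} (h : D.Interlinks i j) :
    D.Interlinks j i := by
  obtain ⟨hne, hx⟩ := h
  refine ⟨hne.symm, ?_⟩
  have key : ∀ (a b : Fin n × Bool), a ≠ b → (D.ep a).val ≠ (D.ep b).val :=
    fun a b hab h => hab (D.ep.injective (Fin.val_injective h))
  have hab := key (i, true) (i, false) (by simp)
  have hcd := key (j, true) (j, false) (by simp)
  have hac := key (i, true) (j, true) (by simp [hne])
  have had := key (i, true) (j, false) (by simp [hne])
  have hbc := key (i, false) (j, true) (by simp [hne])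
  have hbd := key (i, false) (j, false) (by simp [hne])
  simp only [overEnd, under] at *
  have h1 := (D.ep (i, true)).isLt
  have h2 := (D.ep (i, false)).isLt
  have h3 := (D.ep (j, true)).isLt
  have h4 := (D.ep (j, false)).isLt
  simp only [StrictlyBetween, Xor, relpos_spec, overEnd, under] at hx ⊢
  split_ifs at hx ⊢ <;> omega

lemma natCast_zmod2 (k : ℕ) : (k : ZMod 2) = if Odd k then 1 else 0 := by
  rw [← ZMod.natCast_mod k 2]
  rcases Nat.even_or_odd k with h | h
  · rw [Nat.even_iff.mp h, if_neg (Nat.not_odd_iff_even.mpr h)]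
    exact Nat.cast_zero
  · rw [Nat.odd_iff.mp h, if_pos h]
    exact Nat.cast_one

lemma interlink_sum_even (D : ChordDiagram n) :
    ((∑ i, D.interlinkCount i : ℕ) : ZMod 2) = 0 := by
  have hcard : ∑ i, D.interlinkCount i =
      ((Finset.univ ×ˢ Finset.univ).filter fun p : Fin n × Fin n =>
        D.Interlinks p.1 p.2).card := by
    rw [Finset.card_filter, Finset.sum_product]
    simp only [interlinkCount, Finset.card_filter]
  rw [hcard, Finset.card_eq_sum_ones]
  push_cast
  refine Finset.sum_involution (fun p _ => Prod.swap p) (fun a ha => by decide)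
    ?_ ?_ (fun a ha => by simp)
  · intro a ha _ hc
    exact (Finset.mem_filter.mp ha).2.1 (congrArg Prod.fst hc).symm
  · intro a ha
    rw [Finset.mem_filter] at ha ⊢
    exact ⟨by simp, interlinks_symm D ha.2⟩

lemma odd_card_even (D : ChordDiagram n) :
    ((Finset.univ.filter fun i => D.OddChord i).card : ZMod 2) = 0 := by
  have key : ((Finset.univ.filter fun i => D.OddChord i).card : ZMod 2)
      = ((∑ i, D.interlinkCount i : ℕ) : ZMod 2) := by
    rw [Finset.card_eq_sum_ones]
    push_cast
    rw [Finset.sum_filter]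
    simp only [natCast_zmod2]
    rfl
  rw [key, interlink_sum_even]

end Aux


/-- the number of odd chords is even; consequently the odd writhe
`J(K) = Σ_{c odd} w(c)` is an even integer. -/
theorem stmt_2 {n : ℕ} (D : ChordDiagram n) :
    Even (Finset.univ.filter fun i => D.OddChord i).card ∧ Even D.oddWrithe := by
  have hcard := odd_card_even D
  have heven : Even (Finset.univ.filter fun i => D.OddChord i).card := by
    rw [ZMod.natCast_eq_zero_iff] at hcard
    exact even_iff_two_dvd.mpr hcard
  refine ⟨heven, ?_⟩
  rw [even_iff_two_dvd]
  have h2 : ((D.oddWrithe : ZMod 2)) = 0 := by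
    unfold oddWrithe
    push_cast
    have hs : ∀ i ∈ Finset.univ.filter fun i => D.OddChord i,
        ((D.sign i : ZMod 2)) = 1 := by
      intro i _
      rcases D.sign_unit i with h | h <;> rw [h] <;> decide
    rw [Finset.sum_congr rfl hs, Finset.sum_const, nsmul_eq_mul, mul_one, hcard]
  have := (ZMod.intCast_zmod_eq_zero_iff_dvd _ 2).mp h2
  exact_mod_cast this
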